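/- arXiv:2406.09772 — 9 statements merged into one kernel-verified Lean document; each statement's English description precedes it below -/
import Mathlib

section
/- Let f: ℝ^d → ℝ be μ-strongly convex with minimizer x*. Define the Lyapunov function E(x, y) := f(x) − f(x*) + (μ/2)‖y − x*‖² and the vector field G(x, y) := (y − x, x − y − (1/μ)∇f(x)). Then for all x, y ∈ ℝ^d: −⟨∇E(x,y), G(x,y)⟩ ≥ E(x, y) + (μ/2)‖x − y‖². -/
/-! With `u = y - x*` and `v = x - y`, the left-hand side equals `⟪∇f x, x - x*⟫ - μ⟪u, v⟫`.
Strong convexity between `x` and `x*` bounds `⟪∇f x, x - x*⟫` below by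
`f x - f x* + (μ/2)‖u + v‖²`, and expanding `‖u + v‖²` cancels the cross term `μ⟪u, v⟫`. -/

open scoped RealInnerProductSpace

section InnerProductSpace

variable {E : Type*} [NormedAddCommGroup E] [InnerProductSpace ℝ E]

lemma neg_inner_agd_field_eq {μ : ℝ} (hμ : μ ≠ 0) (g x y z : E) :
    -(⟪g, y - x⟫ + ⟪μ • (y - z), x - y - μ⁻¹ • g⟫) = -⟪g, z - x⟫ - μ * ⟪y - z, x - y⟫ := by
  rw [real_inner_smul_left, inner_sub_right (y - z), real_inner_smul_right, mul_sub, ← mul_assoc,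
    mul_inv_cancel₀ hμ, one_mul, real_inner_comm g (y - z)]
  simp only [inner_sub_right]
  ring

lemma norm_sub_sq_eq_add_inner (x y z : E) :
    ‖x - z‖ ^ 2 = ‖y - z‖ ^ 2 + 2 * ⟪y - z, x - y⟫ + ‖x - y‖ ^ 2 := by
  rw [← norm_add_sq_real, sub_add_sub_cancel']

end InnerProductSpace

theorem strong_lyapunov_property_agd_flow_general {d : ℕ}
    (f : EuclideanSpace ℝ (Fin d) → ℝ) (f' : EuclideanSpace ℝ (Fin d) → EuclideanSpace ℝ (Fin d))
    (μ : ℝ) (hμ : 0 < μ)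
    (hsc : ∀ x y, f y - f x - ⟪f' x, y - x⟫ ≥ μ / 2 * ‖x - y‖ ^ 2)
    (xs : EuclideanSpace ℝ (Fin d))
    (x y : EuclideanSpace ℝ (Fin d)) :
    -(⟪f' x, y - x⟫ + ⟪μ • (y - xs), x - y - μ⁻¹ • f' x⟫) ≥
      (f x - f xs + μ / 2 * ‖y - xs‖ ^ 2) + μ / 2 * ‖x - y‖ ^ 2 := by
  rw [neg_inner_agd_field_eq hμ.ne']
  linear_combination hsc x xs - μ / 2 * norm_sub_sq_eq_add_inner x y xs

/-- Strong Lyapunov property for the accelerated gradient flow: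
with `E(x,y) = f x − f x* + (μ/2)‖y − x*‖²`, whose gradient is
`∇E(x,y) = (∇f x, μ(y − x*))`, and
`G(x,y) = (y − x, x − y − (1/μ)∇f x)`, one has
`−⟨∇E(x,y), G(x,y)⟩ ≥ E(x,y) + (μ/2)‖x − y‖²`. -/
theorem strong_lyapunov_property_agd_flow {d : ℕ}
    (f : EuclideanSpace ℝ (Fin d) → ℝ) (f' : EuclideanSpace ℝ (Fin d) → EuclideanSpace ℝ (Fin d))
    (μ : ℝ) (hμ : 0 < μ)
    (hf : ∀ x, HasGradientAt f (f' x) x)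
    (hsc : ∀ x y, f y - f x - ⟪f' x, y - x⟫ ≥ μ / 2 * ‖x - y‖ ^ 2)
    (xs : EuclideanSpace ℝ (Fin d)) (hmin : ∀ z, f xs ≤ f z) (hgrad0 : f' xs = 0)
    (x y : EuclideanSpace ℝ (Fin d)) :
    -(⟪f' x, y - x⟫ + ⟪μ • (y - xs), x - y - μ⁻¹ • f' x⟫) ≥
      (f x - f xs + μ / 2 * ‖y - xs‖ ^ 2) + μ / 2 * ‖x - y‖ ^ 2 :=
  strong_lyapunov_property_agd_flow_general f f' μ hμ hsc xs x y
end

section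
/- Let A be a symmetric positive definite d×d matrix with μI ⪯ A ⪯ LI where 0 < μ ≤ L, and let D = diag(A, μI) and A_sym = [[0, A],[A, 0]] be 2d×2d matrices. Then every eigenvalue λ of D^{-1} A_sym satisfies |λ| ≤ √(L/μ). Consequently, for 0 ≤ α ≤ √(μ/L), (1 − α√(L/μ)) D ⪯ D + α A_sym ⪯ (1 + α√(L/μ)) D. -/
/-!
Put `c = √(L/μ)`. For `s = ±1` the matrix `c D + s A_sym = [[c A, s A], [s A, c μ I]]` is positive
semidefinite: expand `0 ≤ (c x + s y)ᵀ A (c x + s y)` and use `yᵀ A y ≤ L ‖y‖² = c² μ ‖y‖²`.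
The Loewner sandwich is `α` times these two inequalities, and an eigenvector of `D⁻¹ A_sym` is a
generalized eigenvector `A_sym v = λ D v`, so `0 ≤ vᵀ (c D ± A_sym) v = (c ± λ) vᵀ D v` with
`vᵀ D v > 0` gives `|λ| ≤ c`.
-/

open Matrix

namespace Matrix

variable {m n : Type*} [Fintype m] [Fintype n]

theorem sum_elim_dotProduct_fromBlocks_mulVec (P : Matrix m m ℝ) (Q : Matrix m n ℝ)
    (R : Matrix n m ℝ) (S : Matrix n n ℝ) (x : m → ℝ) (y : n → ℝ) :
    Sum.elim x y ⬝ᵥ fromBlocks P Q R S *ᵥ Sum.elim x y =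
      x ⬝ᵥ P *ᵥ x + x ⬝ᵥ Q *ᵥ y + (y ⬝ᵥ R *ᵥ x + y ⬝ᵥ S *ᵥ y) := by
  simp only [fromBlocks_mulVec, dotProduct_block, Sum.elim_comp_inl, Sum.elim_comp_inr,
    dotProduct_add]

theorem PosSemidef.dotProduct_mulVec_le_of_smul_one_sub [DecidableEq n] {A : Matrix n n ℝ}
    {L : ℝ} (h : (L • 1 - A).PosSemidef) (x : n → ℝ) : x ⬝ᵥ A *ᵥ x ≤ L * (x ⬝ᵥ x) := by
  have := h.dotProduct_mulVec_nonneg x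
  simp only [star_trivial, sub_mulVec, smul_mulVec, one_mulVec, dotProduct_sub,
    dotProduct_smul, smul_eq_mul] at this
  linarith

theorem PosSemidef.fromBlocks_smul_smul [DecidableEq n] {A : Matrix n n ℝ}
    (hA : A.PosSemidef) {L μ c s : ℝ} (hupp : (L • 1 - A).PosSemidef) (hc : 0 < c)
    (hcs : s ^ 2 * L ≤ c ^ 2 * μ) :
    (fromBlocks (c • A) (s • A) (s • A) ((c * μ) • 1)).PosSemidef := by
  have hsymm : Aᵀ = A := hA.isHermitian.eq
  refine .of_dotProduct_mulVec_nonneg ?_ fun z => ?_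
  · exact .fromBlocks (hA.isHermitian.smul (.all c)) (by simp [hsymm])
      (isHermitian_one.smul (.all _))
  obtain ⟨x, y, rfl⟩ : ∃ x y, Sum.elim x y = z := ⟨_, _, Sum.elim_comp_inl_inr z⟩
  have hyx : y ⬝ᵥ A *ᵥ x = x ⬝ᵥ A *ᵥ y := by
    rw [dotProduct_mulVec, ← mulVec_transpose, hsymm, dotProduct_comm]
  have hsum := hA.dotProduct_mulVec_nonneg (c • x + s • y)
  have hy := hupp.dotProduct_mulVec_le_of_smul_one_sub y
  simp only [star_trivial, mulVec_add, mulVec_smul, dotProduct_add, add_dotProduct,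
    dotProduct_smul, smul_dotProduct, smul_eq_mul, hyx] at hsum
  rw [star_trivial, sum_elim_dotProduct_fromBlocks_mulVec]
  simp only [smul_mulVec, one_mulVec, dotProduct_smul, smul_eq_mul, hyx]
  have hyy : 0 ≤ y ⬝ᵥ y := dotProduct_self_star_nonneg y
  nlinarith [mul_le_mul_of_nonneg_left hy (sq_nonneg s), mul_le_mul_of_nonneg_right hcs hyy]

theorem PosDef.fromBlocks_zero {A : Matrix m m ℝ}
    {B : Matrix n n ℝ} (hA : A.PosDef) (hB : B.PosDef) :
    (fromBlocks A 0 0 B).PosDef := by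
  refine .of_dotProduct_mulVec_pos (.fromBlocks hA.isHermitian (by simp) hB.isHermitian)
    fun z hz => ?_
  obtain ⟨x, y, rfl⟩ : ∃ x y, Sum.elim x y = z := ⟨_, _, Sum.elim_comp_inl_inr z⟩
  rw [star_trivial, sum_elim_dotProduct_fromBlocks_mulVec]
  simp only [zero_mulVec, dotProduct_zero, add_zero, zero_add]
  by_cases hx : x = 0
  · subst hx
    have hy : y ≠ 0 := by rintro rfl; exact hz Sum.elim_zero_zero
    simpa using hB.dotProduct_mulVec_pos hy
  · exact add_pos_of_pos_of_nonneg (hA.dotProduct_mulVec_pos hx)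
      (hB.posSemidef.dotProduct_mulVec_nonneg y)

theorem abs_le_of_mulVec_eq_smul_mulVec {D M : Matrix n n ℝ}
    (hD : D.PosDef) {c : ℝ} (hadd : (c • D + M).PosSemidef) (hsub : (c • D - M).PosSemidef)
    {lam : ℝ} {v : n → ℝ} (hv : v ≠ 0) (h : M *ᵥ v = lam • D *ᵥ v) : |lam| ≤ c := by
  have hq := hD.dotProduct_mulVec_pos hv
  have h₁ := hadd.dotProduct_mulVec_nonneg v
  have h₂ := hsub.dotProduct_mulVec_nonneg v
  simp only [star_trivial, add_mulVec, sub_mulVec, smul_mulVec, h, dotProduct_add,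
    dotProduct_sub, dotProduct_smul, smul_eq_mul] at h₁ h₂ hq
  rw [abs_le]
  constructor <;> nlinarith

end Matrix

theorem block_matrix_eigenvalue_and_loewner_bounds_general {d : ℕ}
    (A : Matrix (Fin d) (Fin d) ℝ) (μ L : ℝ) (hμ : 0 < μ) (hμL : μ ≤ L)
    (hApos : A.PosDef)
    (hupp : (L • (1 : Matrix (Fin d) (Fin d) ℝ) - A).PosSemidef)
    (D Asym : Matrix (Fin d ⊕ Fin d) (Fin d ⊕ Fin d) ℝ)
    (hD : D = Matrix.fromBlocks A 0 0 (μ • 1))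
    (hAsym : Asym = Matrix.fromBlocks 0 A A 0) :
    (∀ (lam : ℝ) (v : Fin d ⊕ Fin d → ℝ), v ≠ 0 →
        (D⁻¹ * Asym) *ᵥ v = lam • v → |lam| ≤ Real.sqrt (L / μ)) ∧
    (∀ α : ℝ, 0 ≤ α → α ≤ Real.sqrt (μ / L) →
        ((D + α • Asym) - (1 - α * Real.sqrt (L / μ)) • D).PosSemidef ∧
        ((1 + α * Real.sqrt (L / μ)) • D - (D + α • Asym)).PosSemidef) := by
  set c := Real.sqrt (L / μ)
  have hc : 0 < c := Real.sqrt_pos_of_pos (div_pos (hμ.trans_le hμL) hμ)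
  have hcμ : c ^ 2 * μ = L := by
    rw [Real.sq_sqrt (div_pos (hμ.trans_le hμL) hμ).le, div_mul_cancel₀ _ hμ.ne']
  have hblocks (s : ℝ) :
      c • D + s • Asym = fromBlocks (c • A) (s • A) (s • A) ((c * μ) • 1) := by
    simp [hD, hAsym, fromBlocks_smul, fromBlocks_add, smul_smul]
  have hadd : (c • D + Asym).PosSemidef := by
    have h := hApos.posSemidef.fromBlocks_smul_smul hupp hc (μ := μ) (s := 1) (by norm_num [hcμ])
    rwa [← hblocks, one_smul] at h
  have hsub : (c • D - Asym).PosSemidef := by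
    have h := hApos.posSemidef.fromBlocks_smul_smul hupp hc (μ := μ) (s := -1) (by norm_num [hcμ])
    rwa [← hblocks, neg_one_smul, ← sub_eq_add_neg] at h
  have hDpos : D.PosDef := hD ▸ hApos.fromBlocks_zero (PosDef.one.smul hμ)
  refine ⟨fun lam v hv heig => ?_, fun α hα _ => ⟨?_, ?_⟩⟩
  · refine abs_le_of_mulVec_eq_smul_mulVec hDpos hadd hsub hv ?_
    rw [← mulVec_smul, ← heig, mulVec_mulVec, ← Matrix.mul_assoc,
      mul_nonsing_inv _ (D.isUnit_iff_isUnit_det.mp hDpos.isUnit), one_mul]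
  · convert hadd.smul hα using 1
    module
  · convert hsub.smul hα using 1
    module

/-- Eigenvalue bound for `D⁻¹ A_sym` and the resulting Loewner-order sandwich
`(1 − α√(L/μ)) D ⪯ D + α A_sym ⪯ (1 + α√(L/μ)) D` for `0 ≤ α ≤ √(μ/L)`. -/
theorem block_matrix_eigenvalue_and_loewner_bounds {d : ℕ}
    (A : Matrix (Fin d) (Fin d) ℝ) (μ L : ℝ) (hμ : 0 < μ) (hμL : μ ≤ L)
    (hAsymm : A.IsSymm) (hApos : A.PosDef)
    (hlow : (A - μ • (1 : Matrix (Fin d) (Fin d) ℝ)).PosSemidef)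
    (hupp : (L • (1 : Matrix (Fin d) (Fin d) ℝ) - A).PosSemidef)
    (D Asym : Matrix (Fin d ⊕ Fin d) (Fin d ⊕ Fin d) ℝ)
    (hD : D = Matrix.fromBlocks A 0 0 (μ • 1))
    (hAsym : Asym = Matrix.fromBlocks 0 A A 0) :
    (∀ (lam : ℝ) (v : Fin d ⊕ Fin d → ℝ), v ≠ 0 →
        (D⁻¹ * Asym) *ᵥ v = lam • v → |lam| ≤ Real.sqrt (L / μ)) ∧
    (∀ α : ℝ, 0 ≤ α → α ≤ Real.sqrt (μ / L) →
        ((D + α • Asym) - (1 - α * Real.sqrt (L / μ)) • D).PosSemidef ∧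
        ((1 + α * Real.sqrt (L / μ)) • D - (D + α • Asym)).PosSemidef) :=
  block_matrix_eigenvalue_and_loewner_bounds_general A μ L hμ hμL hApos hupp D Asym hD hAsym
end

section
/- Let μ_f, μ_g > 0 and B ∈ ℝ^{n×m}. Define D_μ = diag(μ_f I_m, μ_g I_n) and B_sym = [[0, Bᵀ],[B, 0]]. Then every eigenvalue of D_μ^{-1} B_sym has absolute value at most ‖B‖/√(μ_f μ_g), and for any α, c > 0, (1 − α‖B‖/(c√(μ_f μ_g))) c D_μ ⪯ c D_μ ± α B_sym ⪯ (1 + α‖B‖/(c√(μ_f μ_g))) c D_μ. -/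
/-!
Writing `x, y` for the two blocks of `v`, one has `vᵀ D_μ v = μ_f ‖x‖² + μ_g ‖y‖²` and
`vᵀ B_sym v = 2 yᵀ B x`. Cauchy–Schwarz and AM–GM give
`|vᵀ B_sym v| ≤ 2 ‖B‖ ‖x‖ ‖y‖ ≤ ‖B‖ / √(μ_f μ_g) · vᵀ D_μ v`.
Both claims follow from this comparison of quadratic forms: an eigenpair of `D_μ⁻¹ B_sym` satisfies
`B_sym v = λ D_μ v`, and the Loewner bounds rearrange to
`|τ| ‖B‖ / √(μ_f μ_g) · D_μ + τ B_sym ⪰ 0` for `τ = ±α`.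
-/

open Matrix

theorem two_mul_sqrt_mul_mul_le {a b : ℝ} (ha : 0 ≤ a) (hb : 0 ≤ b) (p q : ℝ) :
    2 * √(a * b) * (p * q) ≤ a * p ^ 2 + b * q ^ 2 := by
  rw [Real.sqrt_mul ha]
  calc _ = 2 * (√a * p) * (√b * q) := by ring
    _ ≤ (√a * p) ^ 2 + (√b * q) ^ 2 := two_mul_le_add_sq _ _
    _ = a * p ^ 2 + b * q ^ 2 := by rw [mul_pow, mul_pow, Real.sq_sqrt ha, Real.sq_sqrt hb]

theorem dotProduct_self_eq_norm_toLp_sq {ι : Type*} [Fintype ι] (x : ι → ℝ) :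
    x ⬝ᵥ x = ‖WithLp.toLp 2 x‖ ^ 2 := by
  rw [← real_inner_self_eq_norm_sq, EuclideanSpace.inner_toLp_toLp, star_trivial]

namespace Matrix

section QuadraticFormComparison

variable {ι : Type*} [Fintype ι] {D S : Matrix ι ι ℝ} {K : ℝ}

theorem PosDef.abs_eigenvalue_inv_mul_le [DecidableEq ι] (hD : D.PosDef)
    (hK : ∀ v, |v ⬝ᵥ S *ᵥ v| ≤ K * (v ⬝ᵥ D *ᵥ v)) {lam : ℝ} {v : ι → ℝ} (hv : v ≠ 0)
    (hlam : (D⁻¹ * S) *ᵥ v = lam • v) : |lam| ≤ K := by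
  have hSv : S *ᵥ v = lam • D *ᵥ v := by
    rw [← mulVec_smul, ← hlam, mulVec_mulVec, ← Matrix.mul_assoc,
      mul_nonsing_inv _ ((isUnit_iff_isUnit_det D).mp hD.isUnit), Matrix.one_mul]
  have hpos : 0 < v ⬝ᵥ D *ᵥ v := by simpa using hD.dotProduct_mulVec_pos hv
  have hvSv := hK v
  rw [hSv, dotProduct_smul, smul_eq_mul, abs_mul, abs_of_pos hpos] at hvSv
  exact le_of_mul_le_mul_right hvSv hpos

theorem posSemidef_smul_add_smul_of_abs_dotProduct_le (hD : D.IsHermitian) (hS : S.IsHermitian)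
    (hK : ∀ v, |v ⬝ᵥ S *ᵥ v| ≤ K * (v ⬝ᵥ D *ᵥ v)) (τ : ℝ) :
    ((|τ| * K) • D + τ • S).PosSemidef := by
  refine .of_dotProduct_mulVec_nonneg ((hD.smul (.all _)).add (hS.smul (.all _))) fun v => ?_
  have hτ : |τ * (v ⬝ᵥ S *ᵥ v)| ≤ |τ| * K * (v ⬝ᵥ D *ᵥ v) := by
    rw [abs_mul, mul_assoc]
    exact mul_le_mul_of_nonneg_left (hK v) (abs_nonneg τ)
  simp only [star_trivial, add_mulVec, smul_mulVec, dotProduct_add, dotProduct_smul, smul_eq_mul]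
  linarith [(abs_le.mp hτ).1]

end QuadraticFormComparison

open scoped Norms.L2Operator in
theorem abs_dotProduct_mulVec_le_l2_opNorm {ι κ : Type*} [Fintype ι] [Fintype κ] [DecidableEq ι]
    (B : Matrix κ ι ℝ) (x : ι → ℝ) (y : κ → ℝ) :
    |y ⬝ᵥ B *ᵥ x| ≤ ‖B‖ * ‖WithLp.toLp 2 x‖ * ‖WithLp.toLp 2 y‖ :=
  calc |y ⬝ᵥ B *ᵥ x| = |inner ℝ (WithLp.toLp 2 (B *ᵥ x)) (WithLp.toLp 2 y)| := by
        rw [EuclideanSpace.inner_toLp_toLp, star_trivial]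
    _ ≤ ‖WithLp.toLp 2 (B *ᵥ x)‖ * ‖WithLp.toLp 2 y‖ := abs_real_inner_le_norm _ _
    _ ≤ ‖B‖ * ‖WithLp.toLp 2 x‖ * ‖WithLp.toLp 2 y‖ := by
        gcongr
        exact l2_opNorm_mulVec B (WithLp.toLp 2 x)

section SaddleBlocks

variable {ι κ : Type*}

theorem isHermitian_fromBlocks_zero_transpose (B : Matrix κ ι ℝ) :
    (fromBlocks 0 Bᵀ B 0).IsHermitian :=
  .fromBlocks isHermitian_zero (by simp [conjTranspose_eq_transpose_of_trivial]) isHermitian_zero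

theorem posDef_fromBlocks_smul_one [DecidableEq ι] [DecidableEq κ] {a b : ℝ} (ha : 0 < a)
    (hb : 0 < b) : (fromBlocks (a • 1) 0 0 (b • 1) : Matrix (ι ⊕ κ) (ι ⊕ κ) ℝ).PosDef := by
  rw [smul_one_eq_diagonal, smul_one_eq_diagonal, fromBlocks_diagonal, posDef_diagonal_iff]
  rintro (i | j)
  exacts [ha, hb]

variable [Fintype ι] [Fintype κ]

theorem dotProduct_fromBlocks_smul_one_mulVec {α : Type*} [CommSemiring α] [DecidableEq ι]
    [DecidableEq κ] (a b : α) (v : ι ⊕ κ → α) :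
    v ⬝ᵥ (fromBlocks (a • 1) 0 0 (b • 1) *ᵥ v) =
      a * (v ∘ Sum.inl ⬝ᵥ v ∘ Sum.inl) + b * (v ∘ Sum.inr ⬝ᵥ v ∘ Sum.inr) := by
  rw [← Sum.elim_comp_inl_inr v, fromBlocks_mulVec]
  simp only [zero_mulVec, zero_add, add_zero, Sum.elim_comp_inl, Sum.elim_comp_inr,
    sumElim_dotProduct_sumElim, smul_mulVec, one_mulVec, dotProduct_smul, smul_eq_mul]

theorem dotProduct_fromBlocks_zero_transpose_mulVec {α : Type*} [CommSemiring α]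
    (B : Matrix κ ι α) (v : ι ⊕ κ → α) :
    v ⬝ᵥ (fromBlocks 0 Bᵀ B 0 *ᵥ v) = 2 * (v ∘ Sum.inr ⬝ᵥ B *ᵥ (v ∘ Sum.inl)) := by
  rw [← Sum.elim_comp_inl_inr v, fromBlocks_mulVec]
  simp only [zero_mulVec, zero_add, add_zero, Sum.elim_comp_inl, Sum.elim_comp_inr,
    sumElim_dotProduct_sumElim, mulVec_transpose, dotProduct_comm (v ∘ Sum.inl), dotProduct_mulVec]
  ring

open scoped Norms.L2Operator in
theorem abs_dotProduct_fromBlocks_zero_transpose_mulVec_le [DecidableEq ι] [DecidableEq κ]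
    (B : Matrix κ ι ℝ) {a b : ℝ} (ha : 0 < a) (hb : 0 < b) (v : ι ⊕ κ → ℝ) :
    |v ⬝ᵥ fromBlocks 0 Bᵀ B 0 *ᵥ v| ≤
      ‖B‖ / √(a * b) * (v ⬝ᵥ fromBlocks (a • 1) 0 0 (b • 1) *ᵥ v) := by
  have hab : 0 < √(a * b) := Real.sqrt_pos.mpr (mul_pos ha hb)
  set x := WithLp.toLp 2 (v ∘ Sum.inl)
  set y := WithLp.toLp 2 (v ∘ Sum.inr)
  rw [dotProduct_fromBlocks_zero_transpose_mulVec, dotProduct_fromBlocks_smul_one_mulVec,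
    dotProduct_self_eq_norm_toLp_sq, dotProduct_self_eq_norm_toLp_sq, abs_mul, abs_two]
  calc 2 * |v ∘ Sum.inr ⬝ᵥ B *ᵥ (v ∘ Sum.inl)| ≤ 2 * (‖B‖ * ‖x‖ * ‖y‖) := by
        gcongr
        exact abs_dotProduct_mulVec_le_l2_opNorm B _ _
    _ = ‖B‖ / √(a * b) * (2 * √(a * b) * (‖x‖ * ‖y‖)) := by field_simp
    _ ≤ ‖B‖ / √(a * b) * (a * ‖x‖ ^ 2 + b * ‖y‖ ^ 2) := by
        gcongr
        exact two_mul_sqrt_mul_mul_le ha.le hb.le _ _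

end SaddleBlocks

end Matrix

/-- Eigenvalue bound for `D_μ⁻¹ B_sym` and the Loewner sandwich
`(1 − α‖B‖/(c√(μ_f μ_g))) c D_μ ⪯ c D_μ ± α B_sym ⪯ (1 + α‖B‖/(c√(μ_f μ_g))) c D_μ`,
where `‖B‖` is the spectral norm of `B`. -/
theorem saddle_block_matrix_eigenvalue_and_loewner_bounds {m n : ℕ}
    (B : Matrix (Fin n) (Fin m) ℝ) (μf μg : ℝ) (hμf : 0 < μf) (hμg : 0 < μg)
    (Dμ Bsym : Matrix (Fin m ⊕ Fin n) (Fin m ⊕ Fin n) ℝ)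
    (hDμ : Dμ = Matrix.fromBlocks (μf • 1) 0 0 (μg • 1))
    (hBsym : Bsym = Matrix.fromBlocks 0 Bᵀ B 0)
    (nB : ℝ)
    (hnB : nB = ‖LinearMap.toContinuousLinearMap (Matrix.toEuclideanLin B)‖) :
    (∀ (lam : ℝ) (v : Fin m ⊕ Fin n → ℝ), v ≠ 0 →
        (Dμ⁻¹ * Bsym) *ᵥ v = lam • v → |lam| ≤ nB / Real.sqrt (μf * μg)) ∧
    (∀ α c : ℝ, 0 < α → 0 < c → ∀ s : ℝ, s = α ∨ s = -α →
        ((c • Dμ + s • Bsym) - (1 - α * nB / (c * Real.sqrt (μf * μg))) • (c • Dμ)).PosSemidef ∧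
        ((1 + α * nB / (c * Real.sqrt (μf * μg))) • (c • Dμ) - (c • Dμ + s • Bsym)).PosSemidef) := by
  have hD : Dμ.PosDef := hDμ ▸ posDef_fromBlocks_smul_one hμf hμg
  have hBsymH : Bsym.IsHermitian := hBsym ▸ isHermitian_fromBlocks_zero_transpose B
  have hK : ∀ v, |v ⬝ᵥ Bsym *ᵥ v| ≤ nB / √(μf * μg) * (v ⬝ᵥ Dμ *ᵥ v) := by
    subst hDμ hBsym hnB
    exact abs_dotProduct_fromBlocks_zero_transpose_mulVec_le B hμf hμg
  refine ⟨fun lam v hv hlam => hD.abs_eigenvalue_inv_mul_le hK hv hlam,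
    fun α c hα hc s hs => ?_⟩
  have hsqrt : 0 < √(μf * μg) := Real.sqrt_pos.mpr (mul_pos hμf hμg)
  have hsα : |s| = α := by rcases hs with rfl | rfl <;> simp [abs_of_pos hα]
  have hlower : (c • Dμ + s • Bsym) - (1 - α * nB / (c * √(μf * μg))) • (c • Dμ) =
      (|s| * (nB / √(μf * μg))) • Dμ + s • Bsym := by
    rw [hsα]
    match_scalars <;> field_simp
    ring
  have hupper : (1 + α * nB / (c * √(μf * μg))) • (c • Dμ) - (c • Dμ + s • Bsym) =
      (|-s| * (nB / √(μf * μg))) • Dμ + (-s) • Bsym := by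
    rw [abs_neg, hsα]
    match_scalars <;> field_simp
    ring
  rw [hlower, hupper]
  exact ⟨posSemidef_smul_add_smul_of_abs_dotProduct_le hD.isHermitian hBsymH hK s,
    posSemidef_smul_add_smul_of_abs_dotProduct_le hD.isHermitian hBsymH hK (-s)⟩
end

section
/- Suppose f: ℝ^d → ℝ is μ-strongly convex and L-smooth, and let ρ = μ/L. Define E(z) = E(x,y) = D_f(x, x*) + (μ/2)‖y − x*‖² where z = (x,y) and x* is the minimizer. Then for any two points z_k = (x_k, y_k), z_{k+1} = (x_{k+1}, y_{k+1}) in ℝ^{2d} and any α > 0: |α⟨y_{k+1} − y_k, ∇f(x_{k+1}) − ∇f(x_k)⟩| ≤ (α/√ρ)·(D_f(x_k, x_{k+1}) + (μ/2)‖y_k − y_{k+1}‖²), so that (1 − α/√ρ) D_E(z_k, z_{k+1}) ≤ D_E(z_k, z_{k+1}) ± α⟨y_{k+1} − y_k, ∇f(x_{k+1}) − ∇f(x_k)⟩ ≤ (1 + α/√ρ) D_E(z_k, z_{k+1}). -/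
/-!
Cauchy–Schwarz bounds the cross term by `‖y_k - y_{k+1}‖ ‖∇f(x_{k+1}) - ∇f(x_k)‖`. For an
`L`-smooth convex `f` the gradient difference is controlled by the Bregman divergence,
`‖∇f(x) - ∇f(x')‖² ≤ 2L D_f(x, x')` (cocoercivity, from the descent lemma at the gradient step
`x - L⁻¹ (∇f(x) - ∇f(x'))`), and the weighted AM–GM inequality
`√(μ/L) a b ≤ b² / (2L) + (μ/2) a²` then gives
`√ρ |⟨y_{k+1} - y_k, ∇f(x_{k+1}) - ∇f(x_k)⟩| ≤ D_E(z_k, z_{k+1})`.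
-/

open scoped RealInnerProductSpace

section Bregman

variable {E : Type*} [NormedAddCommGroup E] [InnerProductSpace ℝ E]

def bregman (f : E → ℝ) (f' : E → E) (y x : E) : ℝ :=
  f y - f x - ⟪f' x, y - x⟫

theorem bregman_three_point (f : E → ℝ) (f' : E → E) (x y z : E) :
    bregman f f' y x = bregman f f' z x - bregman f f' z y + ⟪f' y - f' x, y - z⟫ := by
  simp only [bregman, inner_sub_left, inner_sub_right]
  ring

theorem HasGradientAt.hasDerivAt_comp_line [CompleteSpace E] {f : E → ℝ} {g x v : E} {t : ℝ}
    (hf : HasGradientAt f g (x + t • v)) :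
    HasDerivAt (fun t : ℝ => f (x + t • v)) ⟪g, v⟫ t := by
  have hline : HasDerivAt (fun t : ℝ => x + t • v) v t := by
    simpa using ((hasDerivAt_id t).smul_const v).const_add x
  simpa [Function.comp_def] using hf.hasFDerivAt.comp_hasDerivAt t hline

theorem bregman_le_of_lipschitz_gradient [CompleteSpace E] {f : E → ℝ} {f' : E → E} {L : ℝ}
    (hf : ∀ x, HasGradientAt f (f' x) x) (hsmooth : ∀ x y, ‖f' x - f' y‖ ≤ L * ‖x - y‖)
    (x y : E) :
    bregman f f' y x ≤ L / 2 * ‖y - x‖ ^ 2 := by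
  set v := y - x
  -- `g 0 - g 1` is the claimed inequality; `g' ≤ 0` is the Lipschitz bound at `x + t • v`.
  let g : ℝ → ℝ := fun t => f (x + t • v) - t * ⟪f' x, v⟫ - L / 2 * t ^ 2 * ‖v‖ ^ 2
  have hg : ∀ t, HasDerivAt g (⟪f' (x + t • v) - f' x, v⟫ - L * t * ‖v‖ ^ 2) t := by
    intro t
    have hquad : HasDerivAt (fun t : ℝ => L / 2 * t ^ 2 * ‖v‖ ^ 2) (L * t * ‖v‖ ^ 2) t :=
      (((hasDerivAt_pow 2 t).const_mul (L / 2)).mul_const (‖v‖ ^ 2)).congr_deriv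
        (by push_cast; ring)
    exact (((hf _).hasDerivAt_comp_line.sub ((hasDerivAt_id t).mul_const ⟪f' x, v⟫)).sub
      hquad).congr_deriv (by simp [inner_sub_left])
  have hg' : ∀ t ∈ interior (Set.Icc (0 : ℝ) 1), deriv g t ≤ 0 := by
    intro t ht
    rw [interior_Icc] at ht
    rw [(hg t).deriv, sub_nonpos]
    calc ⟪f' (x + t • v) - f' x, v⟫ ≤ ‖f' (x + t • v) - f' x‖ * ‖v‖ := real_inner_le_norm _ _
      _ ≤ L * ‖t • v‖ * ‖v‖ := by
          gcongr
          simpa using hsmooth (x + t • v) x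
      _ = L * t * ‖v‖ ^ 2 := by rw [norm_smul, Real.norm_of_nonneg ht.1.le]; ring
  have hanti : AntitoneOn g (Set.Icc 0 1) :=
    antitoneOn_of_deriv_nonpos (convex_Icc 0 1) (fun t _ => (hg t).continuousAt.continuousWithinAt)
      (fun t _ => (hg t).differentiableAt.differentiableWithinAt) hg'
  have h01 := hanti (Set.left_mem_Icc.2 zero_le_one) (Set.right_mem_Icc.2 zero_le_one) zero_le_one
  simp only [g, v, zero_smul, add_zero, one_smul, add_sub_cancel] at h01
  simp only [bregman]
  linarith

theorem sq_norm_sub_div_le_bregman {f : E → ℝ} {f' : E → E} {L : ℝ} (hL : 0 < L)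
    (hconv : ∀ x y, 0 ≤ bregman f f' y x) (hdesc : ∀ x y, bregman f f' y x ≤ L / 2 * ‖y - x‖ ^ 2)
    (x y : E) :
    ‖f' y - f' x‖ ^ 2 / (2 * L) ≤ bregman f f' y x := by
  set g := f' y - f' x
  -- Compare `x` and `y` through the gradient step `z = y - L⁻¹ • g` taken from `y`.
  have hsplit := bregman_three_point f f' x y (y - L⁻¹ • g)
  have hdesc_z := hdesc y (y - L⁻¹ • g)
  rw [sub_sub_cancel, real_inner_smul_right, real_inner_self_eq_norm_sq] at hsplit
  rw [sub_sub_cancel_left, norm_neg, norm_smul, Real.norm_of_nonneg (inv_nonneg.2 hL.le)] at hdesc_z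
  have hstep : L / 2 * (L⁻¹ * ‖g‖) ^ 2 = L⁻¹ * ‖g‖ ^ 2 - ‖g‖ ^ 2 / (2 * L) := by
    field_simp; ring
  linarith [hconv x (y - L⁻¹ • g)]

theorem sqrt_div_mul_mul_le {μ L : ℝ} (hμ : 0 ≤ μ) (hL : 0 < L) (a b : ℝ) :
    √(μ / L) * (a * b) ≤ b ^ 2 / (2 * L) + μ / 2 * a ^ 2 := by
  have hsq : L * √(μ / L) ^ 2 = μ := by
    rw [Real.sq_sqrt (div_nonneg hμ hL.le)]; field_simp
  have hgap : b ^ 2 / (2 * L) + μ / 2 * a ^ 2 - √(μ / L) * (a * b)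
      = (b - L * √(μ / L) * a) ^ 2 / (2 * L) := by
    field_simp
    linear_combination (-(L * a ^ 2)) * hsq
  linarith [div_nonneg (sq_nonneg (b - L * √(μ / L) * a)) (by positivity : (0 : ℝ) ≤ 2 * L)]

theorem sqrt_div_mul_abs_inner_le_bregman_add [CompleteSpace E] {f : E → ℝ} {f' : E → E}
    {μ L : ℝ} (hμ : 0 < μ) (hμL : μ ≤ L) (hf : ∀ x, HasGradientAt f (f' x) x)
    (hsc : ∀ x y, μ / 2 * ‖x - y‖ ^ 2 ≤ bregman f f' y x)
    (hsmooth : ∀ x y, ‖f' x - f' y‖ ≤ L * ‖x - y‖) (x x' y y' : E) :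
    √(μ / L) * |⟪y' - y, f' x' - f' x⟫| ≤ bregman f f' x x' + μ / 2 * ‖y - y'‖ ^ 2 := by
  have hL : 0 < L := hμ.trans_le hμL
  have hconv : ∀ x y, 0 ≤ bregman f f' y x := fun x y =>
    (mul_nonneg (by positivity) (sq_nonneg _)).trans (hsc x y)
  have hcoco := sq_norm_sub_div_le_bregman hL hconv
    (bregman_le_of_lipschitz_gradient hf hsmooth) x' x
  calc √(μ / L) * |⟪y' - y, f' x' - f' x⟫|
      ≤ √(μ / L) * (‖y - y'‖ * ‖f' x - f' x'‖) := by
        gcongr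
        rw [norm_sub_rev y, norm_sub_rev (f' x)]
        exact abs_real_inner_le_norm _ _
    _ ≤ ‖f' x - f' x'‖ ^ 2 / (2 * L) + μ / 2 * ‖y - y'‖ ^ 2 := sqrt_div_mul_mul_le hμ.le hL _ _
    _ ≤ bregman f f' x x' + μ / 2 * ‖y - y'‖ ^ 2 := by gcongr

end Bregman

/-- Cross-term bound for the Bregman divergence of the Lyapunov function
`E(x,y) = D_f(x,x*) + (μ/2)‖y − x*‖²`, whose Bregman divergence satisfies
`D_E(z_k, z_{k+1}) = D_f(x_k, x_{k+1}) + (μ/2)‖y_k − y_{k+1}‖²`. -/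
theorem aorhb_cross_term_bregman_bound {d : ℕ}
    (f : EuclideanSpace ℝ (Fin d) → ℝ) (f' : EuclideanSpace ℝ (Fin d) → EuclideanSpace ℝ (Fin d))
    (μ L : ℝ) (hμ : 0 < μ) (hμL : μ ≤ L)
    (hf : ∀ x, HasGradientAt f (f' x) x)
    (hsc : ∀ x y, f y - f x - ⟪f' x, y - x⟫ ≥ μ / 2 * ‖x - y‖ ^ 2)
    (hsmooth : ∀ x y, ‖f' x - f' y‖ ≤ L * ‖x - y‖)
    (ρ : ℝ) (hρ : ρ = μ / L)
    (xk yk xk1 yk1 : EuclideanSpace ℝ (Fin d)) (α : ℝ) (hα : 0 < α)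
    (Df DE : ℝ)
    (hDf : Df = f xk - f xk1 - ⟪f' xk1, xk - xk1⟫)
    (hDE : DE = Df + μ / 2 * ‖yk - yk1‖ ^ 2) :
    |α * ⟪yk1 - yk, f' xk1 - f' xk⟫| ≤ α / Real.sqrt ρ * (Df + μ / 2 * ‖yk - yk1‖ ^ 2) ∧
    (∀ s : ℝ, s = 1 ∨ s = -1 →
      (1 - α / Real.sqrt ρ) * DE ≤ DE + s * (α * ⟪yk1 - yk, f' xk1 - f' xk⟫) ∧
      DE + s * (α * ⟪yk1 - yk, f' xk1 - f' xk⟫) ≤ (1 + α / Real.sqrt ρ) * DE) := by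
  have hsqrt : 0 < √ρ := Real.sqrt_pos.2 (hρ ▸ div_pos hμ (hμ.trans_le hμL))
  have hcross : √ρ * |⟪yk1 - yk, f' xk1 - f' xk⟫| ≤ Df + μ / 2 * ‖yk - yk1‖ ^ 2 := by
    rw [hρ, hDf]; exact sqrt_div_mul_abs_inner_le_bregman_add hμ hμL hf hsc hsmooth xk xk1 yk yk1
  have hbound : |α * ⟪yk1 - yk, f' xk1 - f' xk⟫| ≤ α / √ρ * (Df + μ / 2 * ‖yk - yk1‖ ^ 2) := by
    rw [abs_mul, abs_of_pos hα, div_mul_eq_mul_div, le_div_iff₀ hsqrt, mul_assoc, mul_comm _ √ρ]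
    gcongr
  refine ⟨hbound, fun s hs => ?_⟩
  rw [← hDE] at hbound
  obtain ⟨hlower, hupper⟩ := abs_le.mp hbound
  rcases hs with rfl | rfl <;> constructor <;> linarith
end

section
/- Suppose f is μ-strongly convex and L-smooth with minimizer x*, and let ρ = μ/L, E(x,y) = f(x) − f(x*) + (μ/2)‖y − x*‖², and E^α(x,y) = E(x,y) + α⟨∇f(x) − ∇f(x*), y − x*⟩. Then for 0 < α ≤ √ρ we have 0 ≤ E^α(x,y) ≤ 2E(x,y) and (1 − α/√ρ)E(x,y) ≤ E^α(x,y) for all (x,y) ∈ ℝ^{2d}. -/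
/-!
Since `∇f(x*) = 0`, the cross term of `E^α` is `α⟪∇f(x), y - x*⟫`. The descent lemma applied to
the gradient step `x - L⁻¹ ∇f(x)` gives `‖∇f(x)‖² ≤ 2L (f(x) - f(x*))`, and weighted AM-GM then
bounds `√ρ |⟪∇f(x), y - x*⟫|` by `E(x,y)`. Hence `|E^α - E| ≤ (α/√ρ) E ≤ E`, which yields all
three inequalities.
-/

open scoped RealInnerProductSpace

section Gradient

variable {F : Type*} [NormedAddCommGroup F] [InnerProductSpace ℝ F] [CompleteSpace F]
  {f : F → ℝ} {f' : F → F} {L : ℝ}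

theorem IsLocalMin.hasGradientAt_eq_zero {a g : F} (h : IsLocalMin f a)
    (hf : HasGradientAt f g a) : g = 0 :=
  (InnerProductSpace.toDual ℝ F).map_eq_zero_iff.mp (h.hasFDerivAt_eq_zero hf.hasFDerivAt)

theorem HasGradientAt.hasDerivAt_comp_add_smul {g x v : F} {t : ℝ}
    (hf : HasGradientAt f g (x + t • v)) :
    HasDerivAt (fun t : ℝ => f (x + t • v)) ⟪g, v⟫ t := by
  have hline : HasDerivAt (fun t : ℝ => x + t • v) v t := by
    simpa using ((hasDerivAt_id t).smul_const v).const_add x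
  have h := hf.hasFDerivAt.comp_hasDerivAt t hline
  simp only [InnerProductSpace.toDual_apply_apply] at h
  exact h

theorem le_add_inner_add_of_lipschitz_gradient (hf : ∀ x, HasGradientAt f (f' x) x)
    (hsmooth : ∀ x y, ‖f' x - f' y‖ ≤ L * ‖x - y‖) (x v : F) :
    f (x + v) ≤ f x + ⟪f' x, v⟫ + L / 2 * ‖v‖ ^ 2 := by
  set φ : ℝ → ℝ := fun t => f (x + t • v) - t * ⟪f' x, v⟫ - L / 2 * t ^ 2 * ‖v‖ ^ 2
  have hφ : ∀ t, HasDerivAt φ (⟪f' (x + t • v) - f' x, v⟫ - L * t * ‖v‖ ^ 2) t := by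
    intro t
    have h := ((hf (x + t • v)).hasDerivAt_comp_add_smul.sub
      ((hasDerivAt_id t).mul_const ⟪f' x, v⟫)).sub
      (((hasDerivAt_pow 2 t).const_mul (L / 2)).mul_const (‖v‖ ^ 2))
    refine h.congr_deriv ?_
    rw [inner_sub_left]
    push_cast
    ring
  have hφ_nonpos : ∀ t ∈ interior (Set.Ici (0 : ℝ)),
      ⟪f' (x + t • v) - f' x, v⟫ - L * t * ‖v‖ ^ 2 ≤ 0 := by
    intro t ht
    rw [interior_Ici, Set.mem_Ioi] at ht
    refine sub_nonpos.mpr ?_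
    calc ⟪f' (x + t • v) - f' x, v⟫ ≤ ‖f' (x + t • v) - f' x‖ * ‖v‖ := real_inner_le_norm _ _
      _ ≤ L * ‖t • v‖ * ‖v‖ := by
          gcongr
          simpa using hsmooth (x + t • v) x
      _ = L * t * ‖v‖ ^ 2 := by rw [norm_smul, Real.norm_of_nonneg ht.le]; ring
  have hanti : AntitoneOn φ (Set.Ici 0) :=
    antitoneOn_of_hasDerivWithinAt_nonpos (convex_Ici 0)
      (fun t _ => (hφ t).continuousAt.continuousWithinAt) (fun t _ => (hφ t).hasDerivWithinAt)
      hφ_nonpos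
  have h01 : φ 1 ≤ φ 0 := hanti Set.self_mem_Ici (Set.mem_Ici.mpr zero_le_one) zero_le_one
  norm_num [φ] at h01
  linarith

theorem sq_norm_gradient_le_of_forall_le (hf : ∀ x, HasGradientAt f (f' x) x)
    (hsmooth : ∀ x y, ‖f' x - f' y‖ ≤ L * ‖x - y‖) (hL : 0 < L) {xs : F}
    (hmin : ∀ z, f xs ≤ f z) (x : F) : ‖f' x‖ ^ 2 ≤ 2 * L * (f x - f xs) := by
  have hdesc := le_add_inner_add_of_lipschitz_gradient hf hsmooth x (-L⁻¹ • f' x)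
  rw [inner_smul_right, real_inner_self_eq_norm_sq, norm_smul, norm_neg,
    Real.norm_of_nonneg (inv_nonneg.mpr hL.le)] at hdesc
  have hstep : f xs ≤ f x - ‖f' x‖ ^ 2 / (2 * L) := calc
    f xs ≤ f (x + -L⁻¹ • f' x) := hmin _
    _ ≤ f x + -L⁻¹ * ‖f' x‖ ^ 2 + L / 2 * (L⁻¹ * ‖f' x‖) ^ 2 := hdesc
    _ = f x - ‖f' x‖ ^ 2 / (2 * L) := by field_simp; ring
  rw [le_sub_comm, div_le_iff₀ (by positivity)] at hstep
  linarith

end Gradient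

theorem sqrt_div_mul_abs_inner_le {F : Type*} [NormedAddCommGroup F] [InnerProductSpace ℝ F]
    {μ L a : ℝ} (hμ : 0 ≤ μ) (hL : 0 < L) {g w : F} (hg : ‖g‖ ^ 2 ≤ 2 * L * a) :
    Real.sqrt (μ / L) * |⟪g, w⟫| ≤ a + μ / 2 * ‖w‖ ^ 2 := by
  set s := Real.sqrt (μ / L)
  have hLs : L * s ^ 2 = μ := by rw [Real.sq_sqrt (by positivity)]; field_simp
  have hamgm : 2 * ‖g‖ * (L * s * ‖w‖) ≤ ‖g‖ ^ 2 + (L * s * ‖w‖) ^ 2 := two_mul_le_add_sq _ _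
  calc s * |⟪g, w⟫| ≤ s * (‖g‖ * ‖w‖) := by gcongr; exact abs_real_inner_le_norm g w
    _ ≤ ‖g‖ ^ 2 / (2 * L) + μ / 2 * ‖w‖ ^ 2 := by
        rw [← hLs, div_add' _ _ _ (by positivity), le_div_iff₀ (by positivity)]
        nlinarith
    _ ≤ a + μ / 2 * ‖w‖ ^ 2 := by
        gcongr
        rwa [div_le_iff₀ (by positivity), mul_comm]

theorem modified_lyapunov_bounds_general {d : ℕ}
    (f : EuclideanSpace ℝ (Fin d) → ℝ) (f' : EuclideanSpace ℝ (Fin d) → EuclideanSpace ℝ (Fin d))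
    (μ L : ℝ) (hμ : 0 < μ)
    (hf : ∀ x, HasGradientAt f (f' x) x)
    (hsmooth : ∀ x y, ‖f' x - f' y‖ ≤ L * ‖x - y‖)
    (xs : EuclideanSpace ℝ (Fin d)) (hmin : ∀ z, f xs ≤ f z)
    (ρ : ℝ) (hρ : ρ = μ / L)
    (α : ℝ) (hα : 0 < α) (hαρ : α ≤ Real.sqrt ρ)
    (x y : EuclideanSpace ℝ (Fin d))
    (E Eα : ℝ)
    (hE : E = f x - f xs + μ / 2 * ‖y - xs‖ ^ 2)
    (hEα : Eα = E + α * ⟪f' x - f' xs, y - xs⟫) :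
    0 ≤ Eα ∧ Eα ≤ 2 * E ∧ (1 - α / Real.sqrt ρ) * E ≤ Eα := by
  have hs : 0 < Real.sqrt ρ := hα.trans_le hαρ
  have hL : 0 < L := (div_pos_iff_of_pos_left hμ).mp (hρ ▸ Real.sqrt_pos.mp hs)
  have hcross : Real.sqrt ρ * |⟪f' x - f' xs, y - xs⟫| ≤ E := by
    rw [hE, hρ, IsLocalMin.hasGradientAt_eq_zero (.of_forall hmin) (hf xs), sub_zero]
    exact sqrt_div_mul_abs_inner_le hμ.le hL
      (sq_norm_gradient_le_of_forall_le hf hsmooth hL hmin x)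
  have hE0 : 0 ≤ E := (mul_nonneg hs.le (abs_nonneg _)).trans hcross
  have hk : α / Real.sqrt ρ ≤ 1 := div_le_one_of_le₀ hαρ hs.le
  have hperturb : |α * ⟪f' x - f' xs, y - xs⟫| ≤ α / Real.sqrt ρ * E := calc
    |α * ⟪f' x - f' xs, y - xs⟫|
        = α / Real.sqrt ρ * (Real.sqrt ρ * |⟪f' x - f' xs, y - xs⟫|) := by
      rw [abs_mul, abs_of_pos hα, ← mul_assoc, div_mul_cancel₀ _ hs.ne']
    _ ≤ α / Real.sqrt ρ * E := by gcongr
  have hkE : α / Real.sqrt ρ * E ≤ E := mul_le_of_le_one_left hE0 hk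
  obtain ⟨hlow, hup⟩ := abs_le.mp hperturb
  exact ⟨by linarith, by linarith, by linarith⟩

/-- Bounds relating `E` and the modified Lyapunov function
`E^α(x,y) = E(x,y) + α⟨∇f(x) − ∇f(x*), y − x*⟩` for `0 < α ≤ √(μ/L)`:
`0 ≤ E^α ≤ 2E` and `(1 − α/√ρ)E ≤ E^α`. -/
theorem modified_lyapunov_bounds {d : ℕ}
    (f : EuclideanSpace ℝ (Fin d) → ℝ) (f' : EuclideanSpace ℝ (Fin d) → EuclideanSpace ℝ (Fin d))
    (μ L : ℝ) (hμ : 0 < μ) (hμL : μ ≤ L)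
    (hf : ∀ x, HasGradientAt f (f' x) x)
    (hsc : ∀ x y, f y - f x - ⟪f' x, y - x⟫ ≥ μ / 2 * ‖x - y‖ ^ 2)
    (hsmooth : ∀ x y, ‖f' x - f' y‖ ≤ L * ‖x - y‖)
    (xs : EuclideanSpace ℝ (Fin d)) (hmin : ∀ z, f xs ≤ f z)
    (ρ : ℝ) (hρ : ρ = μ / L)
    (α : ℝ) (hα : 0 < α) (hαρ : α ≤ Real.sqrt ρ)
    (x y : EuclideanSpace ℝ (Fin d))
    (E Eα : ℝ)
    (hE : E = f x - f xs + μ / 2 * ‖y - xs‖ ^ 2)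
    (hEα : Eα = E + α * ⟪f' x - f' xs, y - xs⟫) :
    0 ≤ Eα ∧ Eα ≤ 2 * E ∧ (1 - α / Real.sqrt ρ) * E ≤ Eα :=
  modified_lyapunov_bounds_general f f' μ L hμ hf hsmooth xs hmin ρ hρ α hα hαρ x y E Eα hE hEα
end

section
/- Suppose f is μ-strongly convex and L-smooth with minimizer x*. Let (x_k, y_k) be generated by the AOR-HB iteration (x_{k+1} − x_k)/α = y_k − x_{k+1}, (y_{k+1} − y_k)/α = x_{k+1} − y_{k+1} − (1/μ)(2∇f(x_{k+1}) − ∇f(x_k)) with step size α = √(μ/L). Then with E^α(x,y) = f(x) − f(x*) + (μ/2)‖y − x*‖² + α⟨∇f(x) − ∇f(x*), y − x*⟩, we have E^α(x_{k+1}, y_{k+1}) ≤ (1/(1 + α/2)) E^α(x_k, y_k) for all k ≥ 0. -/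
/-!
Write `μ = α² L`. Besides strong convexity, the proof uses only the cocoercivity inequality
`f x + ⟪∇f x, y - x⟫ + ‖∇f y - ∇f x‖² / (2L) ≤ f y`, which follows from convexity and the
descent lemma of an `L`-smooth function. Using the two update equations as linear identities,
`2L (E^α(x_k, y_k) - (1 + α/2) E^α(x_{k+1}, y_{k+1}))` is a combination of five
strong-convexity and cocoercivity gaps among `x_k`, `x_{k+1}`, `x*` and of four squares, with
coefficients that are nonnegative as long as `α ≤ 1`.
-/

open scoped RealInnerProductSpace

section Smooth

variable {E : Type*} [NormedAddCommGroup E] [InnerProductSpace ℝ E]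
  {f : E → ℝ} {f' : E → E} {L : ℝ}

theorem le_add_inner_add_sq_of_lipschitz_gradient [CompleteSpace E]
    (hf : ∀ x, HasGradientAt f (f' x) x) (hsmooth : ∀ x y, ‖f' x - f' y‖ ≤ L * ‖x - y‖)
    (u v : E) : f v ≤ f u + ⟪f' u, v - u⟫ + L / 2 * ‖v - u‖ ^ 2 := by
  set w := v - u
  set c : ℝ → E := fun t => u + t • w with hc
  set φ : ℝ → ℝ := fun t => f (c t) - t * ⟪f' u, w⟫ - t ^ 2 * (L / 2 * ‖w‖ ^ 2)
  have hφ : ∀ t, HasDerivAt φ (⟪f' (c t), w⟫ - ⟪f' u, w⟫ - 2 * t * (L / 2 * ‖w‖ ^ 2)) t := by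
    intro t
    have hline : HasDerivAt c w t := by
      simpa only [id, one_smul] using ((hasDerivAt_id t).smul_const w).const_add u
    have hfc : HasDerivAt (fun t => f (c t)) ⟪f' (c t), w⟫ t :=
      (hasGradientAt_iff_hasFDerivAt.1 (hf (c t))).comp_hasDerivAt t hline
    have hlin : HasDerivAt (fun t => t * ⟪f' u, w⟫) ⟪f' u, w⟫ t := by
      simpa using (hasDerivAt_id t).mul_const ⟪f' u, w⟫
    have hquad : HasDerivAt (fun t => t ^ 2 * (L / 2 * ‖w‖ ^ 2)) (2 * t * (L / 2 * ‖w‖ ^ 2)) t := by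
      simpa using (hasDerivAt_pow 2 t).mul_const (L / 2 * ‖w‖ ^ 2)
    exact (hfc.sub hlin).sub hquad
  have hanti : AntitoneOn φ (Set.Icc 0 1) := by
    refine antitoneOn_of_hasDerivWithinAt_nonpos (convex_Icc 0 1)
      (fun t _ => (hφ t).continuousAt.continuousWithinAt)
      (fun t _ => (hφ t).hasDerivWithinAt) fun t ht => ?_
    rw [interior_Icc] at ht
    have hct : c t - u = t • w := by simp [hc]
    have hgrad : ⟪f' (c t) - f' u, w⟫ ≤ L * t * ‖w‖ ^ 2 :=
      calc ⟪f' (c t) - f' u, w⟫ ≤ ‖f' (c t) - f' u‖ * ‖w‖ := real_inner_le_norm _ _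
        _ ≤ L * ‖c t - u‖ * ‖w‖ := by gcongr; exact hsmooth _ _
        _ = L * t * ‖w‖ ^ 2 := by
          rw [hct, norm_smul, Real.norm_of_nonneg ht.1.le]; ring
    rw [inner_sub_left] at hgrad
    linarith
  have h01 := hanti ⟨le_rfl, zero_le_one⟩ ⟨zero_le_one, le_rfl⟩ zero_le_one
  simp only [φ, hc, zero_smul, one_smul, add_zero, zero_mul, one_mul,
    sub_zero, one_pow, ne_eq, OfNat.ofNat_ne_zero, not_false_eq_true, zero_pow] at h01
  rw [show u + w = v from add_sub_cancel u v] at h01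
  linarith

theorem add_inner_add_norm_gradient_sub_sq_div_le (hL : 0 < L)
    (hconvex : ∀ x y, f x + ⟪f' x, y - x⟫ ≤ f y)
    (hdescent : ∀ x y, f y ≤ f x + ⟪f' x, y - x⟫ + L / 2 * ‖y - x‖ ^ 2) (u v : E) :
    f u + ⟪f' u, v - u⟫ + ‖f' v - f' u‖ ^ 2 / (2 * L) ≤ f v := by
  -- compare both sides at the point `v - (∇f v - ∇f u) / L`
  set Δ := f' v - f' u
  have hlow := hconvex u (v - L⁻¹ • Δ)
  have hup := hdescent v (v - L⁻¹ • Δ)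
  rw [show v - L⁻¹ • Δ - u = (v - u) - L⁻¹ • Δ by abel, inner_sub_right,
    real_inner_smul_right] at hlow
  rw [show v - L⁻¹ • Δ - v = -(L⁻¹ • Δ) by abel, inner_neg_right, real_inner_smul_right,
    norm_neg, norm_smul, Real.norm_of_nonneg (inv_nonneg.2 hL.le)] at hup
  have hΔ : ⟪f' v, Δ⟫ - ⟪f' u, Δ⟫ = ‖Δ‖ ^ 2 := by
    rw [← inner_sub_left, real_inner_self_eq_norm_sq]
  have hsq : L / 2 * (L⁻¹ * ‖Δ‖) ^ 2 = ‖Δ‖ ^ 2 / (2 * L) := by field_simp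
  have hlin : L⁻¹ * ⟪f' v, Δ⟫ - L⁻¹ * ⟪f' u, Δ⟫ = ‖Δ‖ ^ 2 / L := by
    rw [← mul_sub, hΔ, inv_mul_eq_div]
  have hhalf : ‖Δ‖ ^ 2 / L = 2 * (‖Δ‖ ^ 2 / (2 * L)) := by field_simp
  linarith

end Smooth

section Lyapunov

variable {E : Type*} [NormedAddCommGroup E] [InnerProductSpace ℝ E]
  {f : E → ℝ} {f' : E → E} {xs : E} {μ L α : ℝ}

noncomputable def aorhbLyapunov (f : E → ℝ) (f' : E → E) (xs : E) (μ α : ℝ) (x y : E) : ℝ :=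
  f x - f xs + μ / 2 * ‖y - xs‖ ^ 2 + α * ⟪f' x - f' xs, y - xs⟫

theorem aorhbLyapunov_step_le (hL : 0 < L) (hα : 0 < α) (hα1 : α ≤ 1) (hμ : μ = α ^ 2 * L)
    (hsc : ∀ u v, f v - f u - ⟪f' u, v - u⟫ ≥ μ / 2 * ‖u - v‖ ^ 2)
    (hcoco : ∀ u v, f u + ⟪f' u, v - u⟫ + ‖f' v - f' u‖ ^ 2 / (2 * L) ≤ f v)
    (hxs : f' xs = 0) {x y x' y' : E}
    (hx : x' - x = α • (y - x'))
    (hy : y' - y = α • (x' - y' - μ⁻¹ • ((2 : ℝ) • f' x' - f' x))) :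
    (1 + α / 2) * aorhbLyapunov f f' xs μ α x' y' ≤ aorhbLyapunov f f' xs μ α x y := by
  subst hμ
  have hcoco' : ∀ u v, 2 * L * (f u + ⟪f' u, v - u⟫) + ‖f' v - f' u‖ ^ 2 ≤ 2 * L * f v := by
    intro u v
    have h := mul_le_mul_of_nonneg_left (hcoco u v) (by positivity : 0 ≤ 2 * L)
    rwa [mul_add, mul_div_cancel₀ _ (by positivity)] at h
  have h1α : 0 ≤ 1 - α := by linarith
  have h3α : 0 < 1 / 2 - α / 3 := by linarith
  have hc1 : 0 ≤ α * (3 / 2 - α / 3) * L := mul_nonneg (by nlinarith) hL.le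
  have hc2 : 0 ≤ α * (1 / 2 - α / 3) * L := by positivity
  have hc3 : 0 ≤ α * (1 / 2 - α / 3) / 2 := by positivity
  have W1 := hcoco' x' x
  have W2 := mul_nonneg hc1 (sub_nonneg.2 (hsc x' xs))
  have W3 := mul_nonneg hc2 (sub_nonneg.2 (hsc xs x'))
  have W4 := mul_nonneg hc3 (sub_nonneg.2 (hcoco' x' xs))
  have W5 := mul_nonneg hc3 (sub_nonneg.2 (hcoco' xs x'))
  have S1 : 0 ≤ ‖f' x' - f' x - (α * L) • (y - y')‖ ^ 2 := by positivity
  have S2 : 0 ≤ α / 6 * ‖(3 * α * L) • (y' - xs) - f' x' - (2 * α * L) • (x' - xs)‖ ^ 2 := by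
    positivity
  have S3 : 0 ≤ α ^ 3 * (1 - α) * L ^ 2 / 3 * ‖x' - xs‖ ^ 2 := by positivity
  have S4 : 0 ≤ α * (1 - α) / 3 * ‖f' x'‖ ^ 2 := by positivity
  have hy' : (2 * α ^ 2 * L ^ 2) • (y' - y) =
      (2 * α ^ 3 * L ^ 2) • (x' - y') - (2 * α * L) • ((2 : ℝ) • f' x' - f' x) := by
    rw [hy]
    match_scalars <;> field_simp
  have eY := congrArg (fun v => ⟪v, y' - xs⟫) hy'
  have eX := congrArg (fun v => 2 * L * ⟪f' x', v⟫) hx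
  suffices 0 ≤ 2 * L * (aorhbLyapunov f f' xs (α ^ 2 * L) α x y
      - (1 + α / 2) * aorhbLyapunov f f' xs (α ^ 2 * L) α x' y') by
    linarith [(mul_nonneg_iff_of_pos_left (by positivity : (0 : ℝ) < 2 * L)).1 this]
  simp only [aorhbLyapunov, hxs, sub_zero]
  simp only [hxs, ← real_inner_self_eq_norm_sq] at W1 W2 W3 W4 W5 S1 S2 S3 S4 eY eX ⊢
  simp only [inner_sub_left, inner_sub_right, real_inner_smul_right, inner_zero_left,
    inner_zero_right, real_inner_comm] at W1 W2 W3 W4 W5 S1 S2 S3 S4 eY eX ⊢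
  linarith

end Lyapunov

theorem aorhb_lyapunov_contraction_general {d : ℕ}
    (f : EuclideanSpace ℝ (Fin d) → ℝ) (f' : EuclideanSpace ℝ (Fin d) → EuclideanSpace ℝ (Fin d))
    (μ L : ℝ) (hμ : 0 < μ) (hμL : μ ≤ L)
    (hf : ∀ x, HasGradientAt f (f' x) x)
    (hsc : ∀ x y, f y - f x - ⟪f' x, y - x⟫ ≥ μ / 2 * ‖x - y‖ ^ 2)
    (hsmooth : ∀ x y, ‖f' x - f' y‖ ≤ L * ‖x - y‖)
    (xs : EuclideanSpace ℝ (Fin d)) (hgrad0 : f' xs = 0)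
    (α : ℝ) (hα : α = Real.sqrt (μ / L))
    (x y : ℕ → EuclideanSpace ℝ (Fin d))
    (hx : ∀ k, x (k + 1) - x k = α • (y k - x (k + 1)))
    (hy : ∀ k, y (k + 1) - y k =
      α • (x (k + 1) - y (k + 1) - μ⁻¹ • ((2 : ℝ) • f' (x (k + 1)) - f' (x k))))
    (Eα : ℕ → ℝ)
    (hEα : ∀ k, Eα k = f (x k) - f xs + μ / 2 * ‖y k - xs‖ ^ 2
      + α * ⟪f' (x k) - f' xs, y k - xs⟫) :
    ∀ k, Eα (k + 1) ≤ (1 / (1 + α / 2)) * Eα k := by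
  have hL : 0 < L := hμ.trans_le hμL
  have hαpos : 0 < α := hα ▸ Real.sqrt_pos.2 (div_pos hμ hL)
  have hα1 : α ≤ 1 := hα ▸ Real.sqrt_le_one.2 ((div_le_one hL).2 hμL)
  have hμα : μ = α ^ 2 * L := by
    rw [hα, Real.sq_sqrt (div_pos hμ hL).le, div_mul_cancel₀ _ hL.ne']
  have hcoco := add_inner_add_norm_gradient_sub_sq_div_le hL
    (fun u z => by nlinarith [hsc u z, sq_nonneg ‖u - z‖])
    (le_add_inner_add_sq_of_lipschitz_gradient hf hsmooth)
  intro k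
  rw [one_div_mul_eq_div, le_div_iff₀ (by positivity), mul_comm, hEα, hEα]
  exact aorhbLyapunov_step_le hL hαpos hα1 hμα hsc hcoco hgrad0 (hx k) (hy k)

/-- One-step contraction of the modified Lyapunov function `E^α` along the
AOR-HB iteration with step size `α = √(μ/L)`. -/
theorem aorhb_lyapunov_contraction {d : ℕ}
    (f : EuclideanSpace ℝ (Fin d) → ℝ) (f' : EuclideanSpace ℝ (Fin d) → EuclideanSpace ℝ (Fin d))
    (μ L : ℝ) (hμ : 0 < μ) (hμL : μ ≤ L)
    (hf : ∀ x, HasGradientAt f (f' x) x)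
    (hsc : ∀ x y, f y - f x - ⟪f' x, y - x⟫ ≥ μ / 2 * ‖x - y‖ ^ 2)
    (hsmooth : ∀ x y, ‖f' x - f' y‖ ≤ L * ‖x - y‖)
    (xs : EuclideanSpace ℝ (Fin d)) (hmin : ∀ z, f xs ≤ f z) (hgrad0 : f' xs = 0)
    (α : ℝ) (hα : α = Real.sqrt (μ / L))
    (x y : ℕ → EuclideanSpace ℝ (Fin d))
    (hx : ∀ k, x (k + 1) - x k = α • (y k - x (k + 1)))
    (hy : ∀ k, y (k + 1) - y k =
      α • (x (k + 1) - y (k + 1) - μ⁻¹ • ((2 : ℝ) • f' (x (k + 1)) - f' (x k))))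
    (Eα : ℕ → ℝ)
    (hEα : ∀ k, Eα k = f (x k) - f xs + μ / 2 * ‖y k - xs‖ ^ 2
      + α * ⟪f' (x k) - f' xs, y k - xs⟫) :
    ∀ k, Eα (k + 1) ≤ (1 / (1 + α / 2)) * Eα k :=
  aorhb_lyapunov_contraction_general f f' μ L hμ hμL hf hsc hsmooth xs hgrad0 α hα x y hx hy Eα hEα
end

section
/- Let F: ℝ^d → ℝ be differentiable and μ-strongly convex, N a skew-symmetric linear operator on ℝ^d, and x* the unique solution of ∇F(x) + Nx = 0. Define E(x,y) = D_F(x, x*) + (μ/2)‖y − x*‖² and the vector field G(x,y) = (y − x, x − y − μ^{-1}(∇F(x) + Ny)). Then −⟨∇E(x,y), G(x,y)⟩ ≥ E(x,y) + (μ/2)‖y − x‖² for all x, y ∈ ℝ^d. -/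
open scoped RealInnerProductSpace

/-- Strong Lyapunov property for the accelerated gradient flow applied to the
monotone operator equation `∇F(x) + Nx = 0` with `N` skew-symmetric:
with `E(x,y) = D_F(x, x*) + (μ/2)‖y − x*‖²` and
`G(x,y) = (y − x, x − y − μ⁻¹(∇F(x) + Ny))`,
`−⟨∇E(x,y), G(x,y)⟩ ≥ E(x,y) + (μ/2)‖y − x‖²`. -/
theorem strong_lyapunov_monotone_operator {d : ℕ}
    (F : EuclideanSpace ℝ (Fin d) → ℝ) (F' : EuclideanSpace ℝ (Fin d) → EuclideanSpace ℝ (Fin d))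
    (N : EuclideanSpace ℝ (Fin d) →ₗ[ℝ] EuclideanSpace ℝ (Fin d))
    (μ : ℝ) (hμ : 0 < μ)
    (hF : ∀ x, HasGradientAt F (F' x) x)
    (hsc : ∀ x y, F y - F x - ⟪F' x, y - x⟫ ≥ μ / 2 * ‖x - y‖ ^ 2)
    (hskew : ∀ u v, ⟪N u, v⟫ = -⟪u, N v⟫)
    (xs : EuclideanSpace ℝ (Fin d)) (hxs : F' xs + N xs = 0)
    (x y : EuclideanSpace ℝ (Fin d)) :
    -(⟪F' x - F' xs, y - x⟫ +
        ⟪μ • (y - xs), x - y - μ⁻¹ • (F' x + N y)⟫) ≥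
      (F x - F xs - ⟪F' xs, x - xs⟫ + μ / 2 * ‖y - xs‖ ^ 2) + μ / 2 * ‖y - x‖ ^ 2 := by
  have hvNv : ⟪y - xs, N (y - xs)⟫ = 0 := by
    have h1 := hskew (y - xs) (y - xs)
    have h2 := real_inner_comm (N (y - xs)) (y - xs)
    linarith
  have hNxs : N xs = -F' xs := by
    rw [eq_neg_iff_add_eq_zero, add_comm]; exact hxs
  have hfn : F' x + N y = (F' x - F' xs) + N (y - xs) := by
    rw [map_sub, hNxs]; abel
  rw [hfn]
  have hinner : ⟪μ • (y - xs), x - y - μ⁻¹ • ((F' x - F' xs) + N (y - xs))⟫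
      = μ * ⟪y - xs, x - y⟫ - ⟪F' x - F' xs, y - xs⟫ := by
    rw [real_inner_smul_left, inner_sub_right, real_inner_smul_right, inner_add_right, hvNv,
      real_inner_comm (y - xs) (F' x - F' xs)]
    field_simp
    ring
  rw [hinner]
  have hgyx : ⟪F' x - F' xs, y - x⟫
      = ⟪F' x - F' xs, y - xs⟫ - ⟪F' x - F' xs, x - xs⟫ := by
    rw [← inner_sub_right]; congr 1; abel
  rw [hgyx]
  have hnorm : ‖y - x‖ ^ 2 = ‖y - xs‖ ^ 2 - 2 * ⟪y - xs, x - xs⟫ + ‖x - xs‖ ^ 2 := by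
    have h : y - x = (y - xs) - (x - xs) := by abel
    rw [h, norm_sub_sq_real]
  rw [hnorm]
  have h2 : ⟪y - xs, x - y⟫ = ⟪y - xs, x - xs⟫ - ‖y - xs‖ ^ 2 := by
    have h : x - y = (x - xs) - (y - xs) := by abel
    rw [h, inner_sub_right, real_inner_self_eq_norm_sq]
  rw [h2]
  have hsub : ⟪F' x - F' xs, x - xs⟫ = ⟪F' x, x - xs⟫ - ⟪F' xs, x - xs⟫ :=
    inner_sub_left _ _ _
  rw [hsub]
  have hsc1 := hsc x xs
  have hx1 : ⟪F' x, xs - x⟫ = -⟪F' x, x - xs⟫ := by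
    rw [← inner_neg_right]; congr 1; abel
  rw [hx1] at hsc1
  linarith [hsc1]
end

section
/- Let f be μ_f-strongly convex and g be μ_g-strongly convex, and let (u*, p*) be the saddle point of L(u,p) = f(u) − g(p) + ⟨Bu, p⟩. Define E(u,v,p,q) = D_f(u, u*) + D_g(p, p*) + (μ_f/2)‖v − u*‖² + (μ_g/2)‖q − p*‖² and the HB-saddle vector field G(u,v,p,q) = (v − u, q − p, u − v − (1/μ_f)(∇f(u) + Bᵀq), p − q − (1/μ_g)(∇g(p) − Bv)). Then −⟨∇E, G⟩ ≥ E(u,v,p,q) + (μ_f/2)‖v − u‖² + (μ_g/2)‖q − p‖² for all u, v ∈ ℝ^m and p, q ∈ ℝ^n. -/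
open scoped RealInnerProductSpace

/-- Strong Lyapunov property for the HB-saddle flow: with
`E(u,v,p,q) = D_f(u,u*) + D_g(p,p*) + (μ_f/2)‖v − u*‖² + (μ_g/2)‖q − p*‖²`,
whose gradient is `(∇f(u) − ∇f(u*), μ_f(v − u*), ∇g(p) − ∇g(p*), μ_g(q − p*))`, and
`G(u,v,p,q) = (v − u, q − p, u − v − (1/μ_f)(∇f(u) + Bᵀq), p − q − (1/μ_g)(∇g(p) − Bv))`,
one has `−⟨∇E, G⟩ ≥ E + (μ_f/2)‖v − u‖² + (μ_g/2)‖q − p‖²`. -/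
theorem strong_lyapunov_hb_saddle {m n : ℕ}
    (f : EuclideanSpace ℝ (Fin m) → ℝ) (f' : EuclideanSpace ℝ (Fin m) → EuclideanSpace ℝ (Fin m))
    (g : EuclideanSpace ℝ (Fin n) → ℝ) (g' : EuclideanSpace ℝ (Fin n) → EuclideanSpace ℝ (Fin n))
    (μf μg : ℝ) (hμf : 0 < μf) (hμg : 0 < μg)
    (hf : ∀ x, HasGradientAt f (f' x) x)
    (hg : ∀ x, HasGradientAt g (g' x) x)
    (hfsc : ∀ x y, f y - f x - ⟪f' x, y - x⟫ ≥ μf / 2 * ‖x - y‖ ^ 2)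
    (hgsc : ∀ x y, g y - g x - ⟪g' x, y - x⟫ ≥ μg / 2 * ‖x - y‖ ^ 2)
    (B : EuclideanSpace ℝ (Fin m) →ₗ[ℝ] EuclideanSpace ℝ (Fin n))
    (Bt : EuclideanSpace ℝ (Fin n) →ₗ[ℝ] EuclideanSpace ℝ (Fin m))
    (hBt : ∀ u p, ⟪B u, p⟫ = ⟪u, Bt p⟫)
    (us : EuclideanSpace ℝ (Fin m)) (ps : EuclideanSpace ℝ (Fin n))
    (hsaddle1 : f' us + Bt ps = 0) (hsaddle2 : g' ps - B us = 0)
    (u v : EuclideanSpace ℝ (Fin m)) (p q : EuclideanSpace ℝ (Fin n)) :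
    -(⟪f' u - f' us, v - u⟫ + ⟪g' p - g' ps, q - p⟫ +
        ⟪μf • (v - us), u - v - μf⁻¹ • (f' u + Bt q)⟫ +
        ⟪μg • (q - ps), p - q - μg⁻¹ • (g' p - B v)⟫) ≥
      ((f u - f us - ⟪f' us, u - us⟫) + (g p - g ps - ⟪g' ps, p - ps⟫) +
        μf / 2 * ‖v - us‖ ^ 2 + μg / 2 * ‖q - ps‖ ^ 2) +
      μf / 2 * ‖v - u‖ ^ 2 + μg / 2 * ‖q - p‖ ^ 2 := by
  have hfus : f' us = -(Bt ps) := eq_neg_of_add_eq_zero_left hsaddle1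
  have hgps : g' ps = B us := by rwa [sub_eq_zero] at hsaddle2
  -- expand the two momentum inner products
  have t1 : ⟪μf • (v - us), u - v - μf⁻¹ • (f' u + Bt q)⟫
      = μf * ⟪v - us, u - v⟫ - ⟪v - us, f' u + Bt q⟫ := by
    rw [inner_sub_right, real_inner_smul_left, real_inner_smul_left, real_inner_smul_right]
    field_simp
  have t2 : ⟪μg • (q - ps), p - q - μg⁻¹ • (g' p - B v)⟫
      = μg * ⟪q - ps, p - q⟫ - ⟪q - ps, g' p - B v⟫ := by
    rw [inner_sub_right, real_inner_smul_left, real_inner_smul_left, real_inner_smul_right]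
    field_simp
  have t3 : ⟪v - us, f' u + Bt q⟫ = ⟪f' u - f' us, v - us⟫ + ⟪B (v - us), q - ps⟫ := by
    have h : f' u + Bt q = (f' u - f' us) + Bt (q - ps) := by
      rw [map_sub, hfus]; abel
    rw [h, inner_add_right, real_inner_comm (v - us), hBt]
  have t4 : ⟪q - ps, g' p - B v⟫ = ⟪g' p - g' ps, q - ps⟫ - ⟪B (v - us), q - ps⟫ := by
    have h : g' p - B v = (g' p - g' ps) - B (v - us) := by
      rw [map_sub, hgps]; abel
    rw [h, inner_sub_right, real_inner_comm (q - ps), real_inner_comm (q - ps)]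
  have t5 : ⟪f' u - f' us, v - us⟫ - ⟪f' u - f' us, v - u⟫ = ⟪f' u - f' us, u - us⟫ := by
    rw [← inner_sub_right]; congr 1; abel
  have t6 : ⟪g' p - g' ps, q - ps⟫ - ⟪g' p - g' ps, q - p⟫ = ⟪g' p - g' ps, p - ps⟫ := by
    rw [← inner_sub_right]; congr 1; abel
  have t9 : ⟪v - us, u - v⟫ = -⟪v - us, v - u⟫ := by
    rw [show u - v = -(v - u) by abel, inner_neg_right]
  have t10 : ⟪q - ps, p - q⟫ = -⟪q - ps, q - p⟫ := by
    rw [show p - q = -(q - p) by abel, inner_neg_right]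
  have keyeq : -(⟪f' u - f' us, v - u⟫ + ⟪g' p - g' ps, q - p⟫ +
        ⟪μf • (v - us), u - v - μf⁻¹ • (f' u + Bt q)⟫ +
        ⟪μg • (q - ps), p - q - μg⁻¹ • (g' p - B v)⟫)
      = ⟪f' u - f' us, u - us⟫ + ⟪g' p - g' ps, p - ps⟫ +
        μf * ⟪v - us, v - u⟫ + μg * ⟪q - ps, q - p⟫ := by
    rw [t1, t2, t3, t4, t9, t10]
    linear_combination t5 + t6
  have t7 : ‖u - us‖ ^ 2 = ‖v - us‖ ^ 2 - 2 * ⟪v - us, v - u⟫ + ‖v - u‖ ^ 2 := by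
    rw [show u - us = (v - us) - (v - u) by abel]
    exact norm_sub_sq_real _ _
  have t8 : ‖p - ps‖ ^ 2 = ‖q - ps‖ ^ 2 - 2 * ⟪q - ps, q - p⟫ + ‖q - p‖ ^ 2 := by
    rw [show p - ps = (q - ps) - (q - p) by abel]
    exact norm_sub_sq_real _ _
  have t7' : μf * ⟪v - us, v - u⟫
      = μf / 2 * ‖v - us‖ ^ 2 + μf / 2 * ‖v - u‖ ^ 2 - μf / 2 * ‖u - us‖ ^ 2 := by
    rw [t7]; ring
  have t8' : μg * ⟪q - ps, q - p⟫
      = μg / 2 * ‖q - ps‖ ^ 2 + μg / 2 * ‖q - p‖ ^ 2 - μg / 2 * ‖p - ps‖ ^ 2 := by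
    rw [t8]; ring
  have e1 : ⟪f' u, us - u⟫ = -⟪f' u - f' us, u - us⟫ - ⟪f' us, u - us⟫ := by
    rw [inner_sub_left, show us - u = -(u - us) by abel, inner_neg_right]; ring
  have e2 : ⟪g' p, ps - p⟫ = -⟪g' p - g' ps, p - ps⟫ - ⟪g' ps, p - ps⟫ := by
    rw [inner_sub_left, show ps - p = -(p - ps) by abel, inner_neg_right]; ring
  have h1' : ⟪f' u - f' us, u - us⟫ - μf / 2 * ‖u - us‖ ^ 2
      ≥ f u - f us - ⟪f' us, u - us⟫ := by
    have h := hfsc u us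
    rw [e1] at h; linarith
  have h2' : ⟪g' p - g' ps, p - ps⟫ - μg / 2 * ‖p - ps‖ ^ 2
      ≥ g p - g ps - ⟪g' ps, p - ps⟫ := by
    have h := hgsc p ps
    rw [e2] at h; linarith
  rw [keyeq, t7', t8']
  linarith
end

section
/- Let f be μ-strongly convex and L-smooth, g be convex (possibly non-smooth), and x* the minimizer of f + g with first-order optimality 0 ∈ ∇f(x*) + ∂g(x*). Define E(x,y) = D_f(x,x*) + (μ/2)‖y − x*‖² and, for any subgradient ξ ∈ ∂g(y), the vector field G(x,y) = (y − x, x − y − (1/μ)(∇f(x) + ξ)). Then −⟨∇E(x,y), G(x,y)⟩ ≥ E(x,y) + (μ/2)‖x − y‖² for all x, y. -/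
open scoped RealInnerProductSpace

/-- Strong Lyapunov property for the AOR-HB-composite flow: with
`E(x,y) = D_f(x,x*) + (μ/2)‖y − x*‖²` and, for any subgradient `ξ ∈ ∂g(y)`,
`G(x,y) = (y − x, x − y − (1/μ)(∇f(x) + ξ))`, one has
`−⟨∇E(x,y), G(x,y)⟩ ≥ E(x,y) + (μ/2)‖x − y‖²`. -/
theorem strong_lyapunov_composite {d : ℕ}
    (f : EuclideanSpace ℝ (Fin d) → ℝ) (f' : EuclideanSpace ℝ (Fin d) → EuclideanSpace ℝ (Fin d))
    (g : EuclideanSpace ℝ (Fin d) → ℝ)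
    (μ : ℝ) (hμ : 0 < μ)
    (hf : ∀ x, HasGradientAt f (f' x) x)
    (hsc : ∀ x y, f y - f x - ⟪f' x, y - x⟫ ≥ μ / 2 * ‖x - y‖ ^ 2)
    (hg : ConvexOn ℝ Set.univ g)
    (xs : EuclideanSpace ℝ (Fin d)) (hmin : ∀ z, f xs + g xs ≤ f z + g z)
    (ξs : EuclideanSpace ℝ (Fin d))
    (hξs : ∀ w, g xs + ⟪ξs, w - xs⟫ ≤ g w)  -- ξ* ∈ ∂g(x*)
    (hopt : f' xs + ξs = 0)                  -- 0 ∈ ∇f(x*) + ∂g(x*)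
    (x y ξ : EuclideanSpace ℝ (Fin d))
    (hξ : ∀ w, g y + ⟪ξ, w - y⟫ ≤ g w)       -- ξ ∈ ∂g(y)
    :
    -(⟪f' x - f' xs, y - x⟫ + ⟪μ • (y - xs), x - y - μ⁻¹ • (f' x + ξ)⟫) ≥
      (f x - f xs - ⟪f' xs, x - xs⟫ + μ / 2 * ‖y - xs‖ ^ 2) + μ / 2 * ‖x - y‖ ^ 2 := by
  have hfs : f' xs = -ξs := by
    have := hopt; linear_combination (norm := module) this
  have h1 := hsc x xs
  have h2 := hξ xs
  have h3 := hξs y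
  rw [hfs] at *
  simp only [inner_sub_left, inner_sub_right, inner_add_left, inner_add_right, inner_neg_left, starRingEnd_apply, star_trivial,
    real_inner_smul_left, real_inner_smul_right, inner_smul_left, inner_smul_right,
    norm_sub_sq_real, real_inner_self_eq_norm_sq, RCLike.ofReal_real_eq_id, id] at *
  have hcomm1 : ⟪x, y⟫ = ⟪y, x⟫ := real_inner_comm y x
  have hcomm2 : ⟪x, xs⟫ = ⟪xs, x⟫ := real_inner_comm xs x
  have hcomm3 : ⟪y, xs⟫ = ⟪xs, y⟫ := real_inner_comm xs y
  have hcomm4 : ⟪y, f' x⟫ = ⟪f' x, y⟫ := real_inner_comm (f' x) y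
  have hcomm5 : ⟪xs, f' x⟫ = ⟪f' x, xs⟫ := real_inner_comm (f' x) xs
  have hcomm6 : ⟪y, ξ⟫ = ⟪ξ, y⟫ := real_inner_comm ξ y
  have hcomm7 : ⟪xs, ξ⟫ = ⟪ξ, xs⟫ := real_inner_comm ξ xs
  have hcomm8 : ⟪y, ξs⟫ = ⟪ξs, y⟫ := real_inner_comm ξs y
  have hcomm9 : ⟪xs, ξs⟫ = ⟪ξs, xs⟫ := real_inner_comm ξs xs
  have hμ' : μ * μ⁻¹ = 1 := mul_inv_cancel₀ hμ.ne'
  have e1 : μ⁻¹ * (μ * (⟪y, f' x⟫ - ⟪xs, f' x⟫) + μ * (⟪y, ξ⟫ - ⟪xs, ξ⟫)) =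
      (⟪y, f' x⟫ - ⟪xs, f' x⟫) + (⟪y, ξ⟫ - ⟪xs, ξ⟫) := by
    rw [mul_add, ← mul_assoc, ← mul_assoc, inv_mul_cancel₀ hμ.ne', one_mul, one_mul]
  simp only [hcomm1, hcomm2, hcomm3, hcomm4, hcomm5, hcomm6, hcomm7, hcomm8, hcomm9] at e1 h1 ⊢
  rw [e1]
  linarith [h1, h2, h3]
end
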